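/- arXiv:1908.10845 — 3 statements merged into one kernel-verified Lean document; each statement's English description precedes it below -/
import Mathlib

section
/- Let G be a graph, C a vertex cover of G, s ≥ 1 an integer, and e_1, …, e_s edges of G (repetitions allowed) such that |C ∩ e_j| = 1 for every j with 1 ≤ j ≤ s. Let u = e_1⋯e_s be the product of the corresponding quadratic monomials. Then (p_C^{s+1} : u) = p_C. -/
open MvPolynomial

/-- The edge ideal of a graph `G` on vertices `Fin n`, inside `K[x_1,…,x_n]`. -/
noncomputable def edgeIdeal (K : Type*) [Field K] {n : ℕ} (G : SimpleGraph (Fin n)) :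
    Ideal (MvPolynomial (Fin n) K) :=
  Ideal.span {m | ∃ i j : Fin n, G.Adj i j ∧ m = X i * X j}

/-- `C` is a vertex cover of `G`. -/
def IsVertexCover {n : ℕ} (G : SimpleGraph (Fin n)) (C : Set (Fin n)) : Prop :=
  ∀ ⦃i j : Fin n⦄, G.Adj i j → i ∈ C ∨ j ∈ C

/-- `C` is a minimal vertex cover of `G`. -/
def IsMinVertexCover {n : ℕ} (G : SimpleGraph (Fin n)) (C : Set (Fin n)) : Prop :=
  IsVertexCover G C ∧ ∀ C' ⊆ C, IsVertexCover G C' → C' = C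

/-- The monomial prime ideal generated by the variables in `C`. -/
noncomputable def varIdeal (K : Type*) [Field K] {n : ℕ} (C : Set (Fin n)) :
    Ideal (MvPolynomial (Fin n) K) :=
  Ideal.span (X '' C)

/-- The `s`-th symbolic power of the edge ideal of `G`:
the intersection of `p_C ^ s` over all minimal vertex covers `C` of `G`. -/
noncomputable def symbPower (K : Type*) [Field K] {n : ℕ} (G : SimpleGraph (Fin n)) (s : ℕ) :
    Ideal (MvPolynomial (Fin n) K) :=
  ⨅ (C : Set (Fin n)) (_ : IsMinVertexCover G C), varIdeal K C ^ s


noncomputable section StmtAux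
open Classical

variable {K : Type*} [Field K] {n : ℕ}

/-- C-degree of an exponent vector. -/
def degC (C : Set (Fin n)) (α : Fin n →₀ ℕ) : ℕ := ∑ i, if i ∈ C then α i else 0

lemma degC_add (C : Set (Fin n)) (α β : Fin n →₀ ℕ) :
    degC C (α + β) = degC C α + degC C β := by
  simp [degC, Finset.sum_add_distrib, apply_ite]
  rw [← Finset.sum_add_distrib]
  apply Finset.sum_congr rfl
  intro i _
  split <;> simp

lemma degC_single (C : Set (Fin n)) (i : Fin n) (m : ℕ) :
    degC C (Finsupp.single i m) = if i ∈ C then m else 0 := by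
  classical
  rw [degC]
  rw [Finset.sum_eq_single i]
  · simp
  · intro j _ hj; simp [Finsupp.single_apply, Ne.symm hj]
  · simp

/-- The ideal of polynomials all of whose monomials have C-degree ≥ m. -/
def Dset (C : Set (Fin n)) (m : ℕ) : Ideal (MvPolynomial (Fin n) K) where
  carrier := {f | ∀ α ∈ f.support, m ≤ degC C α}
  zero_mem' := by simp
  add_mem' := by
    intro f g hf hg α hα
    rcases Finset.mem_union.mp (MvPolynomial.support_add hα) with h | h
    · exact hf α h
    · exact hg α h
  smul_mem' := by
    intro c f hf α hα
    rw [smul_eq_mul] at hα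
    obtain ⟨β, hβ, γ, hγ, rfl⟩ := Finset.mem_add.mp (MvPolynomial.support_mul c f hα)
    rw [degC_add]
    exact le_add_of_le_right (hf γ hγ)

lemma mul_mem_Dset {C : Set (Fin n)} {j k : ℕ} {f g : MvPolynomial (Fin n) K}
    (hf : f ∈ Dset C j) (hg : g ∈ Dset C k) : f * g ∈ Dset (K := K) C (j + k) := by
  intro α hα
  obtain ⟨β, hβ, γ, hγ, rfl⟩ := Finset.mem_add.mp (MvPolynomial.support_mul f g hα)
  rw [degC_add]
  exact add_le_add (hf β hβ) (hg γ hγ)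

lemma varIdeal_le_Dset (C : Set (Fin n)) : varIdeal K C ≤ Dset C 1 := by
  rw [varIdeal, Ideal.span_le]
  rintro _ ⟨i, hi, rfl⟩
  intro α hα
  rw [MvPolynomial.support_X] at hα
  rw [Finset.mem_singleton] at hα
  subst hα
  simp [degC_single, hi]

lemma pow_varIdeal_le_Dset (C : Set (Fin n)) (m : ℕ) :
    varIdeal K C ^ m ≤ Dset C m := by
  induction m with
  | zero => intro f _; intro α _; simp
  | succ m ih =>
    rw [pow_succ]
    rw [Ideal.mul_le]
    intro r hr t ht
    exact mul_mem_Dset (ih hr) (varIdeal_le_Dset C ht)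

lemma Dset_one_le_varIdeal (C : Set (Fin n)) : Dset (K := K) C 1 ≤ varIdeal K C := by
  intro f hf
  rw [MvPolynomial.as_sum f]
  apply Ideal.sum_mem
  intro α hα
  have h1 := hf α hα
  have hex : ∃ i, i ∈ C ∧ 1 ≤ α i := by
    by_contra hcon
    push_neg at hcon
    have hz : degC C α = 0 := by
      rw [degC]
      apply Finset.sum_eq_zero
      intro i _
      by_cases h : i ∈ C
      · simp [h, Nat.lt_one_iff.mp (hcon i h)]
      · simp [h]
    omega
  obtain ⟨i, hiC, hi1⟩ := hex
  have hle : Finsupp.single i 1 ≤ α := by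
    rw [Finsupp.single_le_iff]; exact hi1
  have hXmem : (X i : MvPolynomial (Fin n) K) ∈ varIdeal K C :=
    Ideal.subset_span ⟨i, hiC, rfl⟩
  have hfact : (monomial α) (coeff α f) =
      X i * (monomial (α - Finsupp.single i 1)) (coeff α f) := by
    rw [X, monomial_mul, one_mul, add_tsub_cancel_of_le hle]
  rw [hfact]
  exact Ideal.mul_mem_right _ _ hXmem

lemma prod_monomial_one (C : Set (Fin n)) {s : ℕ} (d : Fin s → (Fin n →₀ ℕ)) :
    (∏ k, (monomial (d k)) (1 : K)) = monomial (∑ k, d k) (1 : K) := by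
  induction s with
  | zero => simp
  | succ m ih =>
    rw [Fin.prod_univ_succ, Fin.sum_univ_succ, ih (fun k => d k.succ),
      monomial_mul, one_mul]
end StmtAux

/-- If `C` is a vertex cover of `G` and `e_1, …, e_s` are edges of `G`
(repetitions allowed) each meeting `C` in exactly one endpoint, then for
`u = e_1 ⋯ e_s` one has `(p_C^{s+1} : u) = p_C`. -/
theorem stmt_4 (K : Type*) [Field K] {n : ℕ} (G : SimpleGraph (Fin n))
    (C : Set (Fin n)) (hC : IsVertexCover G C)
    (s : ℕ) (hs : 1 ≤ s) (a b : Fin s → Fin n) (hab : ∀ k, G.Adj (a k) (b k))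
    (hone : ∀ k : Fin s, (a k ∈ C ∧ b k ∉ C) ∨ (a k ∉ C ∧ b k ∈ C)) :
    (varIdeal K C ^ (s + 1)).colon ((Ideal.span {∏ k, X (a k) * X (b k)} : Ideal (MvPolynomial (Fin n) K)) : Set (MvPolynomial (Fin n) K)) =
      varIdeal K C := by
  classical
  set p := varIdeal K C
  -- the exponent vector of u
  set β : Fin n →₀ ℕ := ∑ k, (Finsupp.single (a k) 1 + Finsupp.single (b k) 1) with hβ
  have hu : (∏ k, X (a k) * X (b k) : MvPolynomial (Fin n) K) = monomial β 1 := by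
    rw [hβ, ← prod_monomial_one C]
    apply Finset.prod_congr rfl
    intro k _
    rw [X, X, monomial_mul, one_mul]
  have hdegβ : degC C β = s := by
    rw [hβ]
    have : degC C (∑ k, (Finsupp.single (a k) 1 + Finsupp.single (b k) 1)) =
        ∑ k : Fin s, degC C (Finsupp.single (a k) 1 + Finsupp.single (b k) 1) := by
      induction (Finset.univ : Finset (Fin s)) using Finset.induction with
      | empty => simp [degC]
      | insert _ _ h ih => rw [Finset.sum_insert h, Finset.sum_insert h, degC_add, ih]
    rw [this]
    rw [Finset.sum_congr rfl (fun k _ => ?_), Finset.sum_const, Finset.card_univ,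
      Fintype.card_fin, smul_eq_mul, mul_one]
    rw [degC_add, degC_single, degC_single]
    rcases hone k with ⟨h1, h2⟩ | ⟨h1, h2⟩ <;> simp [h1, h2]
  -- u ∈ p^s
  have humem : (∏ k, X (a k) * X (b k) : MvPolynomial (Fin n) K) ∈ p ^ s := by
    have h1 : (∏ k, X (a k) * X (b k) : MvPolynomial (Fin n) K) ∈
        ∏ _k : Fin s, p := by
      apply Ideal.prod_mem_prod
      intro k _
      rcases hone k with ⟨h1, _⟩ | ⟨_, h2⟩
      · exact Ideal.mul_mem_right _ _ (Ideal.subset_span ⟨a k, h1, rfl⟩)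
      · rw [mul_comm]
        exact Ideal.mul_mem_right _ _ (Ideal.subset_span ⟨b k, h2, rfl⟩)
    simpa using h1
  apply le_antisymm
  · intro f hf
    have hfu : f * (∏ k, X (a k) * X (b k)) ∈ p ^ (s + 1) :=
      Ideal.mem_colon_span_singleton.mp hf
    have hD : f * (∏ k, X (a k) * X (b k)) ∈ Dset C (s + 1) :=
      pow_varIdeal_le_Dset C (s + 1) hfu
    apply Dset_one_le_varIdeal C
    intro α hα
    have hmem : α + β ∈ (f * (∏ k, X (a k) * X (b k))).support := by
      rw [hu, MvPolynomial.mem_support_iff, MvPolynomial.coeff_mul_monomial,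
        mul_one]
      exact MvPolynomial.mem_support_iff.mp hα
    have := hD _ hmem
    rw [degC_add, hdegβ] at this
    omega
  · intro f hf
    rw [Ideal.mem_colon_span_singleton]
    have : f * (∏ k, X (a k) * X (b k)) ∈ p * p ^ s :=
      Ideal.mul_mem_mul hf humem
    rwa [← pow_succ'] at this
end

section
/- Let G be a graph, s ≥ 2 an integer, and let e = x y be an edge of G, identified with the monomial xy. Then (I(G)^{(s+1)} : xy) ⊆ I(G)^{(s−1)}. -/
open MvPolynomial

open Classical in
noncomputable def wdeg {n : ℕ} (C : Set (Fin n)) (d : Fin n →₀ ℕ) : ℕ :=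
  ∑ i, if i ∈ C then d i else 0

lemma wdeg_add {n : ℕ} (C : Set (Fin n)) (a b : Fin n →₀ ℕ) :
    wdeg C (a + b) = wdeg C a + wdeg C b := by
  classical
  simp only [wdeg, Finsupp.add_apply, ← Finset.sum_add_distrib]
  exact Finset.sum_congr rfl fun i _ => by split <;> simp

lemma wdeg_single_le {n : ℕ} (C : Set (Fin n)) (i : Fin n) :
    wdeg C (Finsupp.single i 1) ≤ 1 := by
  classical
  simp only [wdeg]
  calc ∑ j, (if j ∈ C then (Finsupp.single i 1 : Fin n →₀ ℕ) j else 0)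
      ≤ ∑ j, (Finsupp.single i 1 : Fin n →₀ ℕ) j := by
        apply Finset.sum_le_sum; intro j _; split <;> simp
    _ = 1 := by simp

/-- The set of polynomials all of whose monomials have `C`-weighted degree `≥ m`, as an ideal. -/
def wIdeal (K : Type*) [Field K] {n : ℕ} (C : Set (Fin n)) (m : ℕ) :
    Ideal (MvPolynomial (Fin n) K) where
  carrier := {f | ∀ d ∈ f.support, m ≤ wdeg C d}
  zero_mem' := by simp
  add_mem' := by
    intro a b ha hb d hd
    rcases Finset.mem_union.mp (MvPolynomial.support_add hd) with h | h
    · exact ha d h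
    · exact hb d h
  smul_mem' := by
    intro c f hf d hd
    have := MvPolynomial.support_mul c f hd
    rcases Finset.mem_add.mp this with ⟨a, ha, b, hb, rfl⟩
    have := hf b hb
    rw [wdeg_add]; omega

lemma varIdeal_pow_le (K : Type*) [Field K] {n : ℕ} (C : Set (Fin n)) (m : ℕ) :
    varIdeal K C ^ m ≤ wIdeal K C m := by
  induction m with
  | zero => intro f _ d _; omega
  | succ m ih =>
    rw [pow_succ]
    apply Ideal.mul_le.mpr
    intro a ha b hb d hd
    rcases Finset.mem_add.mp (MvPolynomial.support_mul a b hd) with ⟨da, hda, db, hdb, rfl⟩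
    have h1 : m ≤ wdeg C da := ih ha da hda
    have h2 : 1 ≤ wdeg C db := by
      rcases MvPolynomial.mem_ideal_span_X_image.mp hb db hdb with ⟨i, hiC, hi⟩
      classical
      have : (if i ∈ C then db i else 0) ≤ ∑ j, if j ∈ C then db j else 0 :=
        Finset.single_le_sum (f := fun j => if j ∈ C then db j else 0)
          (fun j _ => Nat.zero_le _) (Finset.mem_univ i)
      simp only [hiC, if_pos] at this
      unfold wdeg
      omega
    rw [wdeg_add]; omega

lemma monomial_mem_varIdeal_pow (K : Type*) [Field K] {n : ℕ} (C : Set (Fin n)) (m : ℕ) :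
    ∀ (d : Fin n →₀ ℕ) (c : K), m ≤ wdeg C d → monomial d c ∈ varIdeal K C ^ m := by
  induction m with
  | zero => intro d c _; simp
  | succ m ih =>
    intro d c hm
    classical
    have : ∃ i, i ∈ C ∧ d i ≠ 0 := by
      by_contra h
      push_neg at h
      have : wdeg C d = 0 := by
        unfold wdeg
        apply Finset.sum_eq_zero
        intro i _
        split
        · exact h i ‹_›
        · rfl
      omega
    obtain ⟨i, hiC, hdi⟩ := this
    set d' : Fin n →₀ ℕ := d - Finsupp.single i 1 with hd'
    have hsum : Finsupp.single i 1 + d' = d := by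
      ext j
      simp only [Finsupp.add_apply, hd', Finsupp.tsub_apply, Finsupp.single_apply]
      by_cases hj : i = j
      · subst hj; rw [if_pos rfl]; omega
      · simp [hj]
    have hw : m ≤ wdeg C d' := by
      have := wdeg_add C (Finsupp.single i 1) d'
      rw [hsum] at this
      have h1 := wdeg_single_le C i
      omega
    have : monomial d c = X i * monomial d' c := by
      rw [X, monomial_mul, one_mul, hsum]
    rw [this, pow_succ']
    exact Ideal.mul_mem_mul (Ideal.subset_span ⟨i, hiC, rfl⟩) (ih d' c hw)

lemma mem_varIdeal_pow (K : Type*) [Field K] {n : ℕ} (C : Set (Fin n)) (m : ℕ)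
    (f : MvPolynomial (Fin n) K) :
    f ∈ varIdeal K C ^ m ↔ ∀ d ∈ f.support, m ≤ wdeg C d := by
  constructor
  · exact fun h => varIdeal_pow_le K C m h
  · intro h
    rw [← MvPolynomial.support_sum_monomial_coeff f]
    exact Ideal.sum_mem _ fun d hd => monomial_mem_varIdeal_pow K C m d _ (h d hd)

/-- For an edge `xy` of `G` and `s ≥ 2`,
`(I(G)^{(s+1)} : xy) ⊆ I(G)^{(s-1)}`. -/
theorem stmt_9 (K : Type*) [Field K] {n : ℕ} (G : SimpleGraph (Fin n))
    (s : ℕ) (hs : 2 ≤ s) (x y : Fin n) (hxy : G.Adj x y) :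
    (symbPower K G (s + 1)).colon ((Ideal.span {X x * X y} : Ideal (MvPolynomial (Fin n) K)) : Set (MvPolynomial (Fin n) K)) ≤ symbPower K G (s - 1) := by
  intro f hf
  have hmem : f * (X x * X y) ∈ symbPower K G (s + 1) := Ideal.mem_colon_span_singleton.mp hf
  simp only [symbPower, Ideal.mem_iInf] at hmem ⊢
  intro C hC
  rw [mem_varIdeal_pow]
  intro d hd
  have hCmem : f * (X x * X y) ∈ varIdeal K C ^ (s + 1) := hmem C hC
  have heq : f * (X x * X y)
      = f * monomial (Finsupp.single x 1 + Finsupp.single y 1) (1 : K) := by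
    rw [X, X, monomial_mul, one_mul]
  have hkey : (d + (Finsupp.single x 1 + Finsupp.single y 1))
      ∈ (f * (X x * X y)).support := by
    rw [mem_support_iff, heq, coeff_mul_monomial]
    simpa using mem_support_iff.mp hd
  have hw := (mem_varIdeal_pow K C (s + 1) _).mp hCmem _ hkey
  rw [wdeg_add, wdeg_add] at hw
  have h1 := wdeg_single_le C x
  have h2 := wdeg_single_le C y
  omega
end

section
/- Let G be a gap-free graph and let u = e_1 e_2 be the product of the quadratic monomials corresponding to two (not necessarily distinct) edges e_1, e_2 of G, so that u is a minimal monomial generator of I(G)^2. Let X_0 be the set of variables x_k that belong to (I(G)^{(4)} : u). Then (I(G)^{(4)} : u) + (I(G)^3 : u) = (I(G)^3 : u) + (X_0), where (X_0) denotes the ideal generated by the variables in X_0. -/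
open MvPolynomial

/-- `G` is gap-free: no two disjoint edges of `G` form an induced subgraph, i.e. any two
disjoint edges are joined by an edge of `G`. -/
def GapFree {n : ℕ} (G : SimpleGraph (Fin n)) : Prop :=
  ∀ ⦃a b c d : Fin n⦄, G.Adj a b → G.Adj c d →
    a ≠ c → a ≠ d → b ≠ c → b ≠ d →
    G.Adj a c ∨ G.Adj a d ∨ G.Adj b c ∨ G.Adj b d


section DegOn

variable {n : ℕ}

/-- degree of an exponent vector on a set of coordinates -/
noncomputable def degOn (C : Set (Fin n)) (w : Fin n →₀ ℕ) : ℕ :=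
  ∑ i : Fin n, C.indicator (⇑w) i

lemma degOn_add (C : Set (Fin n)) (u v : Fin n →₀ ℕ) :
    degOn C (u + v) = degOn C u + degOn C v := by
  classical
  unfold degOn
  rw [← Finset.sum_add_distrib]
  refine Finset.sum_congr rfl fun i _ => ?_
  by_cases h : i ∈ C <;>
    simp [Set.indicator_of_mem, Set.indicator_of_notMem, h]

lemma degOn_single_mem {C : Set (Fin n)} {k : Fin n} (h : k ∈ C) (m : ℕ) :
    degOn C (Finsupp.single k m) = m := by
  classical
  unfold degOn
  rw [Finset.sum_eq_single k]
  · simp [Set.indicator_of_mem h]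
  · intro i _ hik
    by_cases hi : i ∈ C <;>
      simp [Set.indicator_of_mem, Set.indicator_of_notMem, hi,
        Finsupp.single_apply, Ne.symm hik]
  · simp

lemma degOn_single_not_mem {C : Set (Fin n)} {k : Fin n} (h : k ∉ C) (m : ℕ) :
    degOn C (Finsupp.single k m) = 0 := by
  classical
  unfold degOn
  refine Finset.sum_eq_zero fun i _ => ?_
  by_cases hi : i ∈ C
  · have : i ≠ k := fun hh => h (hh ▸ hi)
    simp [Set.indicator_of_mem hi, Finsupp.single_apply, Ne.symm this]
  · simp [Set.indicator_of_notMem hi]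

lemma degOn_mono_set {C C' : Set (Fin n)} (h : C ⊆ C') (w : Fin n →₀ ℕ) :
    degOn C w ≤ degOn C' w := by
  refine Finset.sum_le_sum fun i _ => ?_
  by_cases hi : i ∈ C
  · simp [Set.indicator_of_mem hi, Set.indicator_of_mem (h hi)]
  · simp [Set.indicator_of_notMem hi]

lemma degOn_mono {w v : Fin n →₀ ℕ} (h : w ≤ v) (C : Set (Fin n)) :
    degOn C w ≤ degOn C v := by
  refine Finset.sum_le_sum fun i _ => ?_
  by_cases hi : i ∈ C
  · simpa [Set.indicator_of_mem hi] using (Finsupp.le_def.1 h) i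
  · simp [Set.indicator_of_notMem hi]

lemma degOn_eq_zero {C : Set (Fin n)} {w : Fin n →₀ ℕ} (h : ∀ i, w i ≠ 0 → i ∉ C) :
    degOn C w = 0 := by
  refine Finset.sum_eq_zero fun i _ => ?_
  by_cases hi : i ∈ C
  · have : w i = 0 := by by_contra hw; exact h i hw hi
    simp [Set.indicator_of_mem hi, this]
  · simp [Set.indicator_of_notMem hi]

lemma degOn_le_single {C : Set (Fin n)} {w : Fin n →₀ ℕ} {k : Fin n}
    (h : ∀ i, w i ≠ 0 → i ∈ C → i = k) : degOn C w ≤ w k := by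
  classical
  calc degOn C w ≤ ∑ i : Fin n, (if i = k then w k else 0) := by
        refine Finset.sum_le_sum fun i _ => ?_
        by_cases hi : i ∈ C
        · by_cases hw : w i = 0
          · simp [Set.indicator_of_mem hi, hw]
          · have hik := h i hw hi
            subst hik
            simp [Set.indicator_of_mem hi]
        · simp [Set.indicator_of_notMem hi]
    _ = w k := by simp

lemma degOn_eq_sum {C : Set (Fin n)} {w : Fin n →₀ ℕ} (h : ∀ i, w i ≠ 0 → i ∈ C) :
    degOn C w = w.sum fun _ e => e := by
  rw [Finsupp.sum_fintype _ _ fun _ => rfl]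
  refine Finset.sum_congr rfl fun i _ => ?_
  by_cases hi : i ∈ C
  · simp [Set.indicator_of_mem hi]
  · have : w i = 0 := by by_contra hw; exact hi (h i hw)
    simp [Set.indicator_of_notMem hi, this]

lemma exists_le_degOn (C : Set (Fin n)) :
    ∀ (s : ℕ) (μ : Fin n →₀ ℕ), s ≤ degOn C μ →
      ∃ d : Fin n →₀ ℕ, (∀ i, d i ≠ 0 → i ∈ C) ∧ (d.sum fun _ e => e) = s ∧ d ≤ μ
  | 0, μ, _ => ⟨0, by simp, by simp, zero_le⟩
  | (s+1), μ, h => by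
    have hex : ∃ i, i ∈ C ∧ μ i ≠ 0 := by
      by_contra hc
      push_neg at hc
      have h0 : degOn C μ = 0 := degOn_eq_zero fun i hi hiC => hi (hc i hiC)
      omega
    obtain ⟨i, hiC, hi⟩ := hex
    have hle : Finsupp.single i 1 ≤ μ :=
      Finsupp.single_le_iff.2 (Nat.one_le_iff_ne_zero.2 hi)
    have hμ : (μ - Finsupp.single i 1) + Finsupp.single i 1 = μ := tsub_add_cancel_of_le hle
    have hdeg : s ≤ degOn C (μ - Finsupp.single i 1) := by
      have h2 := degOn_add C (μ - Finsupp.single i 1) (Finsupp.single i 1)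
      rw [hμ, degOn_single_mem hiC] at h2
      omega
    obtain ⟨d, hd1, hd2, hd3⟩ := exists_le_degOn C s _ hdeg
    refine ⟨d + Finsupp.single i 1, ?_, ?_, ?_⟩
    · intro j hj
      rw [Finsupp.add_apply] at hj
      by_cases hdj : d j = 0
      · have hsj : Finsupp.single i 1 j ≠ 0 := by simpa [hdj] using hj
        have : j = i := by
          by_contra hji
          exact hsj (Finsupp.single_eq_of_ne' (Ne.symm hji))
        exact this ▸ hiC
      · exact hd1 j hdj
    · rw [Finsupp.sum_add_index' (fun _ => rfl) (fun _ _ _ => rfl), hd2,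
        Finsupp.sum_single_index rfl]
    · calc d + Finsupp.single i 1 ≤ (μ - Finsupp.single i 1) + Finsupp.single i 1 :=
            add_le_add_left hd3 _
        _ = μ := hμ

end DegOn

section Ideals

variable (K : Type*) [Field K] {n : ℕ}

lemma varIdeal_pow_eq (C : Set (Fin n)) (s : ℕ) :
    (varIdeal K C) ^ s =
      Ideal.span ((fun d => monomial d (1 : K)) ''
        {d : Fin n →₀ ℕ | (∀ i, d i ≠ 0 → i ∈ C) ∧ (d.sum fun _ e => e) = s}) := by
  induction s with
  | zero =>
    have h1 : (1 : MvPolynomial (Fin n) K) ∈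
        Ideal.span ((fun d => monomial d (1 : K)) ''
          {d : Fin n →₀ ℕ | (∀ i, d i ≠ 0 → i ∈ C) ∧ (d.sum fun _ e => e) = 0}) := by
      refine Ideal.subset_span ⟨0, ⟨by simp, by simp⟩, by simp⟩
    rw [pow_zero, Ideal.one_eq_top]
    exact ((Ideal.eq_top_iff_one _).2 h1).symm
  | succ s ih =>
    rw [pow_succ, ih]
    rw [varIdeal, Ideal.span_mul_span']
    apply le_antisymm
    · rw [Ideal.span_le]
      rintro z hz
      obtain ⟨x, hx, y, hy, rfl⟩ := Set.mem_mul.1 hz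
      obtain ⟨dd, ⟨hd1, hd2⟩, rfl⟩ := hx
      obtain ⟨i, hiC, rfl⟩ := hy
      apply Ideal.subset_span
      refine ⟨dd + Finsupp.single i 1, ⟨?_, ?_⟩, ?_⟩
      · intro j hj
        rw [Finsupp.add_apply] at hj
        by_cases hdj : dd j = 0
        · have hsj : Finsupp.single i 1 j ≠ 0 := by simpa [hdj] using hj
          have : j = i := by
            by_contra hji
            exact hsj (Finsupp.single_eq_of_ne' (Ne.symm hji))
          exact this ▸ hiC
        · exact hd1 j hdj
      · rw [Finsupp.sum_add_index' (fun _ => rfl) (fun _ _ _ => rfl), hd2,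
          Finsupp.sum_single_index rfl]
      · rw [X, monomial_mul, mul_one]
    · rw [Ideal.span_le]
      rintro z ⟨d, ⟨hd1, hd2⟩, rfl⟩
      have hex : ∃ i, d i ≠ 0 := by
        by_contra hc
        push_neg at hc
        have : d = 0 := Finsupp.ext fun i => hc i
        rw [this] at hd2
        simp at hd2
      obtain ⟨i, hi⟩ := hex
      have hle : Finsupp.single i 1 ≤ d :=
        Finsupp.single_le_iff.2 (Nat.one_le_iff_ne_zero.2 hi)
      have hd : (d - Finsupp.single i 1) + Finsupp.single i 1 = d := tsub_add_cancel_of_le hle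
      have heq : monomial d (1 : K) = monomial (d - Finsupp.single i 1) 1 * X i := by
        rw [X, monomial_mul, mul_one, hd]
      show monomial d (1:K) ∈ _
      rw [heq]
      refine Ideal.subset_span (Set.mul_mem_mul ⟨d - Finsupp.single i 1, ⟨?_, ?_⟩, rfl⟩
        ⟨i, hd1 i hi, rfl⟩)
      · intro j hj
        apply hd1
        intro h0
        apply hj
        have : ((d - Finsupp.single i 1 : Fin n →₀ ℕ)) j ≤ d j :=
          Finsupp.le_def.1 tsub_le_self j
        omega
      · have h2 : ((d - Finsupp.single i 1) + Finsupp.single i 1).sum (fun _ e => e)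
            = ((d - Finsupp.single i 1).sum fun _ e => e) + 1 := by
          rw [Finsupp.sum_add_index' (fun _ => rfl) (fun _ _ _ => rfl),
            Finsupp.sum_single_index rfl]
        rw [hd, hd2] at h2
        omega

lemma mem_varIdeal_pow_iff (C : Set (Fin n)) (s : ℕ) (f : MvPolynomial (Fin n) K) :
    f ∈ (varIdeal K C) ^ s ↔ ∀ μ ∈ f.support, s ≤ degOn C μ := by
  rw [varIdeal_pow_eq, mem_ideal_span_monomial_image]
  refine forall₂_congr fun μ hμ => ?_
  constructor
  · rintro ⟨d, ⟨hd1, hd2⟩, hle⟩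
    calc s = d.sum fun _ e => e := hd2.symm
      _ = degOn C d := (degOn_eq_sum hd1).symm
      _ ≤ degOn C μ := degOn_mono hle C
  · intro h
    obtain ⟨d, h1, h2, h3⟩ := exists_le_degOn C s μ h
    exact ⟨d, ⟨h1, h2⟩, h3⟩

/-- exponent vector of the product of the two edges -/
noncomputable def Uexp {n : ℕ} (a b c d : Fin n) : Fin n →₀ ℕ :=
  Finsupp.single a 1 + Finsupp.single b 1 + Finsupp.single c 1 + Finsupp.single d 1

lemma Uexp_def {n : ℕ} (a b c d : Fin n) :
    Uexp a b c d = Finsupp.single a 1 + Finsupp.single b 1 + Finsupp.single c 1 +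
      Finsupp.single d 1 := rfl

lemma prod_X_eq (a b c d : Fin n) :
    ((X a * X b) * (X c * X d) : MvPolynomial (Fin n) K) = monomial (Uexp a b c d) 1 := by
  rw [X, X, X, X, monomial_mul, monomial_mul, monomial_mul, Uexp_def]
  simp [add_assoc]

lemma support_mul_monomial (f : MvPolynomial (Fin n) K) (U : Fin n →₀ ℕ) (μ : Fin n →₀ ℕ) :
    μ ∈ (f * monomial U 1).support ↔ ∃ ν ∈ f.support, μ = ν + U := by
  rw [mem_support_iff, coeff_mul_monomial']
  constructor
  · intro h
    split_ifs at h with hU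
    · rw [mul_one] at h
      exact ⟨μ - U, mem_support_iff.2 h, (tsub_add_cancel_of_le hU).symm⟩
    · exact absurd rfl h
  · rintro ⟨ν, hν, rfl⟩
    rw [if_pos le_add_self, add_tsub_cancel_right, mul_one]
    exact mem_support_iff.1 hν

lemma mem_symb_colon_iff {G : SimpleGraph (Fin n)} (a b c d : Fin n)
    (f : MvPolynomial (Fin n) K) :
    f ∈ (symbPower K G 4).colon
        ((Ideal.span {(X a * X b) * (X c * X d)} : Ideal (MvPolynomial (Fin n) K)) :
          Set (MvPolynomial (Fin n) K)) ↔
      ∀ μ ∈ f.support, ∀ C : Set (Fin n), IsMinVertexCover G C →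
        4 ≤ degOn C (μ + Uexp a b c d) := by
  rw [Ideal.mem_colon_span_singleton, prod_X_eq, symbPower]
  simp only [Submodule.mem_iInf]
  constructor
  · intro h μ hμ C hC
    exact (mem_varIdeal_pow_iff K C 4 _).1 (h C hC) (μ + Uexp a b c d)
      ((support_mul_monomial K f _ _).2 ⟨μ, hμ, rfl⟩)
  · intro h C hC
    rw [mem_varIdeal_pow_iff]
    intro ν hν
    obtain ⟨μ, hμ, rfl⟩ := (support_mul_monomial K f _ _).1 hν
    exact h μ hμ C hC

lemma X_mem_symb_colon_iff {G : SimpleGraph (Fin n)} (a b c d : Fin n) (k : Fin n) :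
    (X k : MvPolynomial (Fin n) K) ∈
        (symbPower K G 4).colon
        ((Ideal.span {(X a * X b) * (X c * X d)} : Ideal (MvPolynomial (Fin n) K)) :
          Set (MvPolynomial (Fin n) K)) ↔
      ∀ C : Set (Fin n), IsMinVertexCover G C →
        4 ≤ degOn C (Finsupp.single k 1 + Uexp a b c d) := by
  rw [mem_symb_colon_iff, support_X]
  simp

lemma monomial_mem_edgeIdeal_pow3 {G : SimpleGraph (Fin n)} (ν : Fin n →₀ ℕ) (cf : K)
    (p q r s t v : Fin n) (h1 : G.Adj p q) (h2 : G.Adj r s) (h3 : G.Adj t v)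
    (hle : Finsupp.single p 1 + Finsupp.single q 1 + Finsupp.single r 1 + Finsupp.single s 1 +
      Finsupp.single t 1 + Finsupp.single v 1 ≤ ν) :
    monomial ν cf ∈ edgeIdeal K G ^ 3 := by
  have e1 : ((X p * X q : MvPolynomial (Fin n) K)) ∈ edgeIdeal K G :=
    Ideal.subset_span ⟨p, q, h1, rfl⟩
  have e2 : ((X r * X s : MvPolynomial (Fin n) K)) ∈ edgeIdeal K G :=
    Ideal.subset_span ⟨r, s, h2, rfl⟩
  have e3 : ((X t * X v : MvPolynomial (Fin n) K)) ∈ edgeIdeal K G :=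
    Ideal.subset_span ⟨t, v, h3, rfl⟩
  have hprod : ((X p * X q) * (X r * X s) * (X t * X v) : MvPolynomial (Fin n) K)
      ∈ edgeIdeal K G ^ 3 := by
    rw [pow_succ, pow_succ, pow_one]
    exact Ideal.mul_mem_mul (Ideal.mul_mem_mul e1 e2) e3
  set E : Fin n →₀ ℕ := Finsupp.single p 1 + Finsupp.single q 1 + Finsupp.single r 1 +
    Finsupp.single s 1 + Finsupp.single t 1 + Finsupp.single v 1 with hE
  have hXE : ((X p * X q) * (X r * X s) * (X t * X v) : MvPolynomial (Fin n) K)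
      = monomial E 1 := by
    rw [X, X, X, X, X, X, monomial_mul, monomial_mul, monomial_mul, monomial_mul, monomial_mul,
      hE]
    simp only [mul_one]
    congr 1
    abel
  have key : monomial ν cf = monomial (ν - E) cf *
      ((X p * X q) * (X r * X s) * (X t * X v)) := by
    rw [hXE, monomial_mul, mul_one, tsub_add_cancel_of_le hle]
  rw [key]
  exact Ideal.mul_mem_left _ _ hprod

end Ideals

section Covers

variable {n : ℕ}

/-- `S` is an independent set of `G`. -/
def Indep (G : SimpleGraph (Fin n)) (S : Set (Fin n)) : Prop :=
  ∀ ⦃i⦄, i ∈ S → ∀ ⦃j⦄, j ∈ S → ¬ G.Adj i j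

lemma minCover_compl_indep {G : SimpleGraph (Fin n)} {C : Set (Fin n)}
    (hC : IsMinVertexCover G C) : Indep G Cᶜ := by
  intro i hi j hj hij
  rcases hC.1 hij with h | h
  · exact hi h
  · exact hj h

lemma exists_minCover_disjoint (G : SimpleGraph (Fin n)) (S : Set (Fin n)) (hS : Indep G S) :
    ∃ C : Set (Fin n), IsMinVertexCover G C ∧ C ⊆ Sᶜ := by
  classical
  let P : Finset (Fin n) → Prop := fun T => S ⊆ ↑T ∧ Indep G ↑T
  let 𝒮 : Finset (Finset (Fin n)) := Finset.univ.filter P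
  have hne : 𝒮.Nonempty := by
    refine ⟨Finset.univ.filter (· ∈ S), ?_⟩
    simp only [𝒮, P, Finset.mem_filter, Finset.mem_univ, true_and]
    constructor
    · intro x hx; simp [hx]
    · intro i hi j hj hij
      simp only [Finset.coe_filter, Set.mem_setOf_eq] at hi hj
      exact hS hi.2 hj.2 hij
  obtain ⟨T, hT, hmax⟩ := Finset.exists_max_image 𝒮 Finset.card hne
  simp only [𝒮, P, Finset.mem_filter, Finset.mem_univ, true_and] at hT
  obtain ⟨hST, hTind⟩ := hT
  refine ⟨(↑T : Set (Fin n))ᶜ, ⟨?_, ?_⟩, ?_⟩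
  · intro i j hij
    by_contra hc
    push_neg at hc
    simp only [Set.mem_compl_iff, not_not] at hc
    exact hTind hc.1 hc.2 hij
  · intro C' hC' hC'cov
    refine Set.Subset.antisymm hC' fun v hv => ?_
    by_contra hvC'
    have hvT : v ∉ T := hv
    have hind : Indep G ↑(insert v T) := by
      intro i hi j hj hij
      simp only [Finset.coe_insert, Set.mem_insert_iff, Finset.mem_coe] at hi hj
      rcases hi with rfl | hi <;> rcases hj with rfl | hj
      · exact G.loopless.irrefl _ hij
      · rcases hC'cov hij with h | h
        · exact hvC' h
        · exact (hC' h) hj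
      · rcases hC'cov hij with h | h
        · exact (hC' h) hi
        · exact hvC' h
      · exact hTind hi hj hij
    have hmem : insert v T ∈ 𝒮 := by
      simp only [𝒮, P, Finset.mem_filter, Finset.mem_univ, true_and]
      exact ⟨hST.trans (by simp [Finset.coe_insert, Set.subset_insert]), hind⟩
    have := hmax _ hmem
    rw [Finset.card_insert_of_notMem hvT] at this
    omega
  · intro x hx
    exact fun hxS => hx (hST hxS)

end Covers

section MainComb

variable {n : ℕ}

lemma degOn_single_compl (S : Set (Fin n)) (x : Fin n) [Decidable (x ∈ S)] :
    degOn Sᶜ (Finsupp.single x 1) = if x ∈ S then 0 else 1 := by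
  classical
  by_cases hx : x ∈ S
  · rw [degOn_single_not_mem (by simpa using hx), if_pos hx]
  · rw [degOn_single_mem (by simpa using hx), if_neg hx]

lemma degOn_Uexp (S : Set (Fin n)) (a b c d : Fin n) [Decidable (a ∈ S)] [Decidable (b ∈ S)]
    [Decidable (c ∈ S)] [Decidable (d ∈ S)] :
    degOn Sᶜ (Uexp a b c d) =
      (if a ∈ S then 0 else 1) + (if b ∈ S then 0 else 1) +
      (if c ∈ S then 0 else 1) + (if d ∈ S then 0 else 1) := by
  rw [Uexp_def, degOn_add, degOn_add, degOn_add, degOn_single_compl, degOn_single_compl,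
    degOn_single_compl, degOn_single_compl]

lemma pair_le_of {M : Fin n →₀ ℕ} {k l : Fin n} (hkl : k ≠ l) (hk : M k ≠ 0) (hl : M l ≠ 0) :
    Finsupp.single k 1 + Finsupp.single l 1 ≤ M := by
  classical
  have hk' : 1 ≤ M k := Nat.one_le_iff_ne_zero.2 hk
  have hl' : 1 ≤ M l := Nat.one_le_iff_ne_zero.2 hl
  rw [Finsupp.le_def]
  intro i
  rw [Finsupp.add_apply]
  rcases eq_or_ne k i with rfl | h1
  · have h2 : l ≠ k := fun h => hkl h.symm
    simpa [Finsupp.single_apply, h2] using hk'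
  · rcases eq_or_ne l i with rfl | h2
    · simpa [Finsupp.single_apply, fun h => h1 h] using hl'
    · simp [Finsupp.single_apply, h1, h2]

lemma two_le_of {M : Fin n →₀ ℕ} {k : Fin n} (hk : 2 ≤ M k) :
    Finsupp.single k 1 + Finsupp.single k 1 ≤ M := by
  classical
  rw [Finsupp.le_def]
  intro i
  rw [Finsupp.add_apply]
  rcases eq_or_ne k i with rfl | h1
  · simpa [Finsupp.single_apply] using hk
  · simp [Finsupp.single_apply, h1]

lemma mainComb (G : SimpleGraph (Fin n)) (hgf : GapFree G) (a b c d : Fin n)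
    (hab : G.Adj a b) (hcd : G.Adj c d) (M : Fin n →₀ ℕ)
    (hA : ∀ S : Set (Fin n), Indep G S → 4 ≤ degOn Sᶜ (M + Uexp a b c d))
    (hH : ∀ k, M k ≠ 0 → ∃ S : Set (Fin n), Indep G S ∧
      degOn Sᶜ (Finsupp.single k 1 + Uexp a b c d) ≤ 3) :
    ∃ p q r s t v, G.Adj p q ∧ G.Adj r s ∧ G.Adj t v ∧
      Finsupp.single p 1 + Finsupp.single q 1 + Finsupp.single r 1 + Finsupp.single s 1 +
        Finsupp.single t 1 + Finsupp.single v 1 ≤ M + Uexp a b c d := by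
  classical
  by_contra hne
  -- generic tool for producing elements of `I^3`
  have key6 : ∀ w1 w2 : Fin n →₀ ℕ, w1 = w2 + Uexp a b c d → w2 ≤ M →
      w1 ≤ M + Uexp a b c d := by
    intro w1 w2 he hle
    rw [he]
    exact add_le_add_left hle _
  -- Step 1 : the support of M is an independent set
  have hMind : ∀ k l, M k ≠ 0 → M l ≠ 0 → ¬ G.Adj k l := by
    intro k l hk hl hadj
    refine hne ⟨a, b, c, d, k, l, hab, hcd, hadj, key6 _ _ (by rw [Uexp_def]; abel)
      (pair_le_of hadj.ne hk hl)⟩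
  -- Step 2 : every vertex of u has a neighbour in the support of M
  have hnb : ∀ x : Fin n, (x = a ∨ x = b ∨ x = c ∨ x = d) → ∃ k, M k ≠ 0 ∧ G.Adj x k := by
    intro x hx
    by_contra hc
    push_neg at hc
    have hS : Indep G ({x} ∪ {i | M i ≠ 0}) := by
      intro i hi j hj hij
      simp only [Set.mem_union, Set.mem_singleton_iff, Set.mem_setOf_eq] at hi hj
      rcases hi with rfl | hi <;> rcases hj with rfl | hj
      · exact G.loopless.irrefl _ hij
      · exact hc j hj hij
      · exact hc i hi hij.symm
      · exact hMind i j hi hj hij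
    have h4 := hA _ hS
    rw [degOn_add, degOn_Uexp] at h4
    have hM0 : degOn ({x} ∪ {i | M i ≠ 0})ᶜ M = 0 :=
      degOn_eq_zero fun i hi hic => hic (Or.inr hi)
    rw [hM0] at h4
    have hxmem : x ∈ ({x} ∪ {i | M i ≠ 0}) := Or.inl rfl
    rcases hx with rfl | rfl | rfl | rfl <;>
      · rw [if_pos hxmem] at h4
        split_ifs at h4 <;> omega
  have hM0' : ∀ x : Fin n, (x = a ∨ x = b ∨ x = c ∨ x = d) → M x = 0 := by
    intro x hx
    by_contra hMx
    obtain ⟨k, hk, hadj⟩ := hnb x hx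
    exact hMind x k hMx hk hadj
  -- Step 3 : unique `M`-neighbours for each edge of u
  obtain ⟨ka, hka, haka⟩ := hnb a (Or.inl rfl)
  obtain ⟨kb, hkb, hbkb⟩ := hnb b (Or.inr (Or.inl rfl))
  obtain ⟨kc, hkc, hckc⟩ := hnb c (Or.inr (Or.inr (Or.inl rfl)))
  obtain ⟨kd, hkd, hdkd⟩ := hnb d (Or.inr (Or.inr (Or.inr rfl)))
  have huab : ∀ j1 j2, M j1 ≠ 0 → M j2 ≠ 0 → G.Adj a j1 → G.Adj b j2 → j1 = j2 := by
    intro j1 j2 h1 h2 hA1 hB1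
    by_contra h12
    exact hne ⟨a, j1, b, j2, c, d, hA1, hB1, hcd, key6 _ _ (by rw [Uexp_def]; abel)
      (pair_le_of h12 h1 h2)⟩
  have hucd : ∀ j1 j2, M j1 ≠ 0 → M j2 ≠ 0 → G.Adj c j1 → G.Adj d j2 → j1 = j2 := by
    intro j1 j2 h1 h2 hC1 hD1
    by_contra h12
    exact hne ⟨c, j1, d, j2, a, b, hC1, hD1, hab, key6 _ _ (by rw [Uexp_def]; abel)
      (pair_le_of h12 h1 h2)⟩
  have huab1 : ∀ j, M j ≠ 0 → G.Adj a j → G.Adj b j → M j = 1 := by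
    intro j hj hA1 hB1
    by_contra hj1
    have h2 : 2 ≤ M j := by omega
    exact hne ⟨a, j, b, j, c, d, hA1, hB1, hcd, key6 _ _ (by rw [Uexp_def]; abel)
      (two_le_of h2)⟩
  have hucd1 : ∀ j, M j ≠ 0 → G.Adj c j → G.Adj d j → M j = 1 := by
    intro j hj hC1 hD1
    by_contra hj1
    have h2 : 2 ≤ M j := by omega
    exact hne ⟨c, j, d, j, a, b, hC1, hD1, hab, key6 _ _ (by rw [Uexp_def]; abel)
      (two_le_of h2)⟩
  have hkab : ka = kb := huab ka kb hka hkb haka hbkb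
  have hkcd : kc = kd := hucd kc kd hkc hkd hckc hdkd
  subst hkab
  subst hkcd
  -- now `ka` is adjacent to `a, b` and `kc` to `c, d`
  have hMk1 : M ka = 1 := huab1 ka hka haka hbkb
  have hMl1 : M kc = 1 := hucd1 kc hkc hckc hdkd
  have hkaonly : ∀ j, M j ≠ 0 → G.Adj a j ∨ G.Adj b j → j = ka := by
    intro j hj hcase
    rcases hcase with h | h
    · exact huab j ka hj hka h hbkb
    · exact (huab ka j hka hj haka h).symm
  have hkconly : ∀ j, M j ≠ 0 → G.Adj c j ∨ G.Adj d j → j = kc := by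
    intro j hj hcase
    rcases hcase with h | h
    · exact hucd j kc hj hkc h hdkd
    · exact (hucd kc j hkc hj hckc h).symm
  by_cases hkl : ka = kc
  · -- the two special vertices coincide
    subst hkl
    have honly : ∀ j, M j ≠ 0 → (G.Adj a j ∨ G.Adj b j ∨ G.Adj c j ∨ G.Adj d j) → j = ka := by
      intro j hj h
      rcases h with h | h | h | h
      · exact hkaonly j hj (Or.inl h)
      · exact hkaonly j hj (Or.inr h)
      · exact hkconly j hj (Or.inl h)
      · exact hkconly j hj (Or.inr h)
    have hA' : ∀ S : Set (Fin n), Indep G S → (∀ i, M i ≠ 0 → i ∉ S → i = ka) →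
        3 ≤ degOn Sᶜ (Uexp a b c d) := by
      intro S hS hMS
      have h4 := hA S hS
      rw [degOn_add] at h4
      have hM1 : degOn Sᶜ M ≤ M ka :=
        degOn_le_single fun i hi hic => hMS i hi (by simpa using hic)
      rw [hMk1] at hM1
      omega
    by_cases hsh : a = c ∨ a = d ∨ b = c ∨ b = d
    · -- a shared vertex between the two edges
      obtain ⟨x, hx1, hx2⟩ : ∃ x, (x = a ∨ x = b) ∧ (x = c ∨ x = d) := by
        rcases hsh with h | h | h | h
        · exact ⟨a, Or.inl rfl, Or.inl h⟩
        · exact ⟨a, Or.inl rfl, Or.inr h⟩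
        · exact ⟨b, Or.inr rfl, Or.inl h⟩
        · exact ⟨b, Or.inr rfl, Or.inr h⟩
      have hSind : Indep G ({x} ∪ {i | M i ≠ 0 ∧ i ≠ ka}) := by
        intro i hi j hj hij
        simp only [Set.mem_union, Set.mem_singleton_iff, Set.mem_setOf_eq] at hi hj
        rcases hi with rfl | ⟨hi1, hi2⟩ <;> rcases hj with rfl | ⟨hj1, hj2⟩
        · exact G.loopless.irrefl _ hij
        · apply hj2
          apply honly j hj1
          rcases hx1 with rfl | rfl
          · exact Or.inl hij
          · exact Or.inr (Or.inl hij)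
        · apply hi2
          apply honly i hi1
          rcases hx1 with rfl | rfl
          · exact Or.inl hij.symm
          · exact Or.inr (Or.inl hij.symm)
        · exact hMind i j hi1 hj1 hij
      have h3 := hA' _ hSind (by
        intro i hi hiS
        by_contra hik
        exact hiS (Or.inr ⟨hi, hik⟩))
      rw [degOn_Uexp] at h3
      have hxS : x ∈ ({x} ∪ {i | M i ≠ 0 ∧ i ≠ ka}) := Or.inl rfl
      rcases hx1 with rfl | rfl <;> rcases hx2 with rfl | rfl <;>
        · rw [if_pos hxS] at h3
          split_ifs at h3 <;> omega
    · -- all four vertices distinct : derive a K4 and contradict hH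
      push_neg at hsh
      obtain ⟨hac, had, hbc, hbd⟩ := hsh
      have hcross : ∀ x y : Fin n, (x = a ∨ x = b) → (y = c ∨ y = d) → G.Adj x y := by
        intro x y hx hy
        by_contra hnadj
        have hxy : x ≠ y := by
          rcases hx with rfl | rfl <;> rcases hy with rfl | rfl <;> assumption
        have hSind : Indep G ({x, y} ∪ {i | M i ≠ 0 ∧ i ≠ ka}) := by
          intro i hi j hj hij
          simp only [Set.mem_union, Set.mem_insert_iff, Set.mem_singleton_iff,
            Set.mem_setOf_eq] at hi hj
          have hxadj : ∀ j', M j' ≠ 0 → j' ≠ ka → ¬ G.Adj x j' := by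
            intro j' h1 h2 hadj
            apply h2
            apply honly j' h1
            rcases hx with rfl | rfl
            · exact Or.inl hadj
            · exact Or.inr (Or.inl hadj)
          have hyadj : ∀ j', M j' ≠ 0 → j' ≠ ka → ¬ G.Adj y j' := by
            intro j' h1 h2 hadj
            apply h2
            apply honly j' h1
            rcases hy with rfl | rfl
            · exact Or.inr (Or.inr (Or.inl hadj))
            · exact Or.inr (Or.inr (Or.inr hadj))
          rcases hi with (rfl | rfl) | ⟨hi1, hi2⟩ <;> rcases hj with (rfl | rfl) | ⟨hj1, hj2⟩
          · exact G.loopless.irrefl _ hij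
          · exact hnadj hij
          · exact hxadj j hj1 hj2 hij
          · exact hnadj hij.symm
          · exact G.loopless.irrefl _ hij
          · exact hyadj j hj1 hj2 hij
          · exact hxadj i hi1 hi2 hij.symm
          · exact hyadj i hi1 hi2 hij.symm
          · exact hMind i j hi1 hj1 hij
        have h3 := hA' _ hSind (by
          intro i hi hiS
          by_contra hik
          exact hiS (Or.inr ⟨hi, hik⟩))
        rw [degOn_Uexp] at h3
        have hxS : x ∈ ({x, y} ∪ {i | M i ≠ 0 ∧ i ≠ ka}) := Or.inl (Or.inl rfl)
        have hyS : y ∈ ({x, y} ∪ {i | M i ≠ 0 ∧ i ≠ ka}) := Or.inl (Or.inr rfl)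
        rcases hx with rfl | rfl <;> rcases hy with rfl | rfl <;>
          · rw [if_pos hxS, if_pos hyS] at h3
            split_ifs at h3 <;> omega
      obtain ⟨S, hSind, hdeg⟩ := hH ka (by rw [hMk1]; exact one_ne_zero)
      rw [degOn_add, degOn_Uexp, degOn_single_compl] at hdeg
      have eab : ¬(a ∈ S ∧ b ∈ S) := fun ⟨h1, h2⟩ => hSind h1 h2 hab
      have ecd : ¬(c ∈ S ∧ d ∈ S) := fun ⟨h1, h2⟩ => hSind h1 h2 hcd
      have eac : ¬(a ∈ S ∧ c ∈ S) := fun ⟨h1, h2⟩ =>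
        hSind h1 h2 (hcross a c (Or.inl rfl) (Or.inl rfl))
      have ead : ¬(a ∈ S ∧ d ∈ S) := fun ⟨h1, h2⟩ =>
        hSind h1 h2 (hcross a d (Or.inl rfl) (Or.inr rfl))
      have ebc : ¬(b ∈ S ∧ c ∈ S) := fun ⟨h1, h2⟩ =>
        hSind h1 h2 (hcross b c (Or.inr rfl) (Or.inl rfl))
      have ebd : ¬(b ∈ S ∧ d ∈ S) := fun ⟨h1, h2⟩ =>
        hSind h1 h2 (hcross b d (Or.inr rfl) (Or.inr rfl))
      have eka : ∀ z : Fin n, G.Adj z ka → ¬(ka ∈ S ∧ z ∈ S) := fun z hz ⟨h1, h2⟩ =>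
        hSind h2 h1 hz
      by_cases h1 : ka ∈ S
      · rw [if_pos h1, if_neg (fun h => eka a haka ⟨h1, h⟩),
          if_neg (fun h => eka b hbkb ⟨h1, h⟩), if_neg (fun h => eka c hckc ⟨h1, h⟩),
          if_neg (fun h => eka d hdkd ⟨h1, h⟩)] at hdeg
        omega
      · rw [if_neg h1] at hdeg
        by_cases h2 : a ∈ S
        · rw [if_pos h2, if_neg (fun h => eab ⟨h2, h⟩), if_neg (fun h => eac ⟨h2, h⟩),
            if_neg (fun h => ead ⟨h2, h⟩)] at hdeg
          omega
        · rw [if_neg h2] at hdeg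
          by_cases h3 : b ∈ S
          · rw [if_pos h3, if_neg (fun h => ebc ⟨h3, h⟩), if_neg (fun h => ebd ⟨h3, h⟩)] at hdeg
            omega
          · rw [if_neg h3] at hdeg
            by_cases h4 : c ∈ S
            · rw [if_pos h4, if_neg (fun h => ecd ⟨h4, h⟩)] at hdeg
              omega
            · rw [if_neg h4] at hdeg
              split_ifs at hdeg <;> omega
  · -- ka ≠ kc : use gap-freeness
    have hMka : M ka ≠ 0 := by rw [hMk1]; exact one_ne_zero
    have hMkc : M kc ≠ 0 := by rw [hMl1]; exact one_ne_zero
    have hdists : a ≠ c ∧ a ≠ d ∧ b ≠ c ∧ b ≠ d := by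
      refine ⟨?_, ?_, ?_, ?_⟩ <;> intro h <;> apply hkl
      · exact hkconly ka hMka (Or.inl (h ▸ haka))
      · exact hkconly ka hMka (Or.inr (h ▸ haka))
      · exact hkconly ka hMka (Or.inl (h ▸ hbkb))
      · exact hkconly ka hMka (Or.inr (h ▸ hbkb))
    obtain ⟨hac, had, hbc, hbd⟩ := hdists
    have hpair := pair_le_of hkl hMka hMkc
    rcases hgf hab hcd hac had hbc hbd with h | h | h | h
    · exact hne ⟨a, c, b, ka, d, kc, h, hbkb, hdkd, key6 _ _ (by rw [Uexp_def]; abel) hpair⟩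
    · exact hne ⟨a, d, b, ka, c, kc, h, hbkb, hckc, key6 _ _ (by rw [Uexp_def]; abel) hpair⟩
    · exact hne ⟨b, c, a, ka, d, kc, h, haka, hdkd, key6 _ _ (by rw [Uexp_def]; abel) hpair⟩
    · exact hne ⟨b, d, a, ka, c, kc, h, haka, hckc, key6 _ _ (by rw [Uexp_def]; abel) hpair⟩

end MainComb

/-- Let `G` be gap-free and `u = e₁ e₂` a minimal monomial generator of
`I(G)^2` (a product of two, not necessarily distinct, edges `e₁ = ab`, `e₂ = cd`). If `X_0`
is the set of variables belonging to `(I(G)^{(4)} : u)`, then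
`(I(G)^{(4)} : u) + (I(G)^3 : u) = (I(G)^3 : u) + (X_0)`. -/
theorem stmt_12 (K : Type*) [Field K] {n : ℕ} (G : SimpleGraph (Fin n))
    (hgf : GapFree G) (a b c d : Fin n) (hab : G.Adj a b) (hcd : G.Adj c d) :
    (symbPower K G 4).colon
        ((Ideal.span {(X a * X b) * (X c * X d)} : Ideal (MvPolynomial (Fin n) K)) :
          Set (MvPolynomial (Fin n) K))
        + (edgeIdeal K G ^ 3).colon
        ((Ideal.span {(X a * X b) * (X c * X d)} : Ideal (MvPolynomial (Fin n) K)) :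
          Set (MvPolynomial (Fin n) K)) =
      (edgeIdeal K G ^ 3).colon
        ((Ideal.span {(X a * X b) * (X c * X d)} : Ideal (MvPolynomial (Fin n) K)) :
          Set (MvPolynomial (Fin n) K))
        + Ideal.span
            (X '' {k : Fin n |
              X k ∈ (symbPower K G 4).colon
                ((Ideal.span {(X a * X b) * (X c * X d)} : Ideal (MvPolynomial (Fin n) K)) :
                  Set (MvPolynomial (Fin n) K))}) := by
  classical
  rw [Submodule.add_eq_sup, Submodule.add_eq_sup]
  apply le_antisymm
  · apply sup_le
    · -- the hard inclusion : A ≤ B ⊔ span X₀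
      intro f hf
      rw [← support_sum_monomial_coeff f]
      apply Ideal.sum_mem
      intro μ hμ
      have hAμ : ∀ C : Set (Fin n), IsMinVertexCover G C →
          4 ≤ degOn C (μ + Uexp a b c d) :=
        fun C hC => (mem_symb_colon_iff K a b c d f).1 hf μ hμ C hC
      by_cases hX : ∃ k, μ k ≠ 0 ∧ ∀ C : Set (Fin n), IsMinVertexCover G C →
          4 ≤ degOn C (Finsupp.single k 1 + Uexp a b c d)
      · obtain ⟨k, hk, hkX⟩ := hX
        apply Submodule.mem_sup_right
        have hXk : (X k : MvPolynomial (Fin n) K) ∈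
            Ideal.span (X '' {k : Fin n |
              X k ∈ (symbPower K G 4).colon
        ((Ideal.span {(X a * X b) * (X c * X d)} : Ideal (MvPolynomial (Fin n) K)) :
          Set (MvPolynomial (Fin n) K))}) :=
          Ideal.subset_span ⟨k, (X_mem_symb_colon_iff K a b c d k).2 hkX, rfl⟩
        have heq : monomial μ (coeff μ f) =
            monomial (μ - Finsupp.single k 1) (coeff μ f) * X k := by
          rw [X, monomial_mul, mul_one,
            tsub_add_cancel_of_le (Finsupp.single_le_iff.2 (Nat.one_le_iff_ne_zero.2 hk))]
        rw [heq]
        exact Ideal.mul_mem_left _ _ hXk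
      · push_neg at hX
        apply Submodule.mem_sup_left
        -- translate the hypotheses into the language of independent sets
        have hA : ∀ S : Set (Fin n), Indep G S → 4 ≤ degOn Sᶜ (μ + Uexp a b c d) := by
          intro S hS
          obtain ⟨C, hC, hCsub⟩ := exists_minCover_disjoint G S hS
          exact le_trans (hAμ C hC) (degOn_mono_set hCsub _)
        have hH : ∀ k, μ k ≠ 0 → ∃ S : Set (Fin n), Indep G S ∧
            degOn Sᶜ (Finsupp.single k 1 + Uexp a b c d) ≤ 3 := by
          intro k hk
          obtain ⟨C, hC, hCdeg⟩ := hX k hk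
          refine ⟨Cᶜ, minCover_compl_indep hC, ?_⟩
          rw [compl_compl]
          omega
        obtain ⟨p, q, r, s, t, v, h1, h2, h3, hle⟩ :=
          mainComb G hgf a b c d hab hcd μ hA hH
        rw [Ideal.mem_colon_span_singleton, prod_X_eq]
        have : monomial μ (coeff μ f) * monomial (Uexp a b c d) (1 : K) =
            monomial (μ + Uexp a b c d) (coeff μ f) := by
          rw [monomial_mul, mul_one]
        rw [this]
        exact monomial_mem_edgeIdeal_pow3 K _ _ p q r s t v h1 h2 h3 hle
    · exact le_sup_left
  · apply sup_le
    · exact le_sup_right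
    · refine le_trans ?_ le_sup_left
      rw [Ideal.span_le]
      rintro x ⟨k, hk, rfl⟩
      exact hk
end
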